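/- arXiv:2507.14504 — 2 statements merged into one kernel-verified Lean document; each statement's English description precedes it below -/
import Mathlib

section
/- Let G be a finite simple graph with m edges in which every vertex has degree between 2 and 4, and every degree-4 vertex has at most 2 neighbors of degree 4. Let n3 and n4 be the numbers of vertices of degree 3 and 4 respectively. Then n3 + 2·n4 ≤ (8/9)·m. -/
/-!
By the handshake lemma, `3 n₃ + 4 n₄ ≤ 2 m`. Each of the `4 n₄` darts leaving a degree-4
vertex lies on an edge, and an edge carries two of them only if both its ends have degree 4; by the
neighbour condition there are at most `n₄` such edges, so `4 n₄ ≤ m + n₄`. Hence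
`9 (n₃ + 2 n₄) = 3 (3 n₃ + 4 n₄) + 6 n₄ ≤ 8 m`.
-/

open Finset

namespace SimpleGraph

variable {V : Type*} [Fintype V] (G : SimpleGraph V) [DecidableRel G.Adj]

lemma mul_card_degree_eq_add_mul_card_degree_eq_le {k l : ℕ} (hkl : k ≠ l) :
    k * #{v | G.degree v = k} + l * #{v | G.degree v = l} ≤ 2 * #G.edgeFinset := by
  rw [← sum_degrees_eq_twice_card_edges, card_filter, card_filter, mul_sum, mul_sum,
    ← sum_add_distrib]
  refine sum_le_sum fun v _ => ?_
  split_ifs <;> omega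

variable [DecidableEq V]

lemma card_darts_fst_mem (s : Finset V) :
    #{d : G.Dart | d.fst ∈ s} = ∑ v ∈ s, G.degree v := by
  rw [card_eq_sum_card_fiberwise (f := fun d : G.Dart => d.fst)
    (s := {d : G.Dart | d.fst ∈ s}) (t := s) (fun d hd => (mem_filter.1 hd).2)]
  refine sum_congr rfl fun v hv => ?_
  rw [filter_filter, ← G.dart_fst_fiber_card_eq_degree v]
  congr 1
  ext d
  simp only [mem_filter, mem_univ, true_and, and_iff_right_iff_imp]
  rintro rfl
  exact hv

lemma card_darts_fst_mem_snd_mem_le (s : Finset V) (k : ℕ)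
    (h : ∀ v ∈ s, #{w ∈ G.neighborFinset v | w ∈ s} ≤ k) :
    #{d : G.Dart | d.fst ∈ s ∧ d.snd ∈ s} ≤ k * #s := by
  refine card_le_mul_card_image_of_maps_to (f := fun d : G.Dart => d.fst)
    (fun d hd => (mem_filter.1 hd).2.1) k fun v hv =>
      (card_le_card_of_injOn (fun d : G.Dart => d.snd) ?_ ?_).trans (h v hv)
  · intro d hd
    simp only [coe_filter, mem_filter, mem_univ, true_and, Set.mem_ofPred_eq] at hd
    simp only [coe_filter, mem_neighborFinset, Set.mem_ofPred_eq]
    exact ⟨hd.2 ▸ d.adj, hd.1.2⟩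
  · intro d hd d' hd' hsnd
    simp only [coe_filter, mem_filter, mem_univ, true_and, Set.mem_ofPred_eq] at hd hd'
    exact Dart.ext _ _ (Prod.ext (hd.2.trans hd'.2.symm) hsnd)

lemma card_darts_fst_mem_snd_notMem_le (s : Finset V) :
    #{d : G.Dart | d.fst ∈ s ∧ d.snd ∉ s} ≤ #{d : G.Dart | d.fst ∉ s} :=
  card_le_card_of_injOn Dart.symm (fun d hd => by simp_all)
    (Dart.symm_involutive.injective.injOn)

lemma two_mul_sum_degree_le (s : Finset V) (k : ℕ)
    (h : ∀ v ∈ s, #{w ∈ G.neighborFinset v | w ∈ s} ≤ k) :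
    2 * ∑ v ∈ s, G.degree v ≤ 2 * #G.edgeFinset + k * #s := by
  have hsplit := card_filter_add_card_filter_not (s := {d : G.Dart | d.fst ∈ s})
    (fun d => d.snd ∈ s)
  have hall := card_filter_add_card_filter_not (s := (univ : Finset G.Dart))
    (fun d => d.fst ∈ s)
  simp only [filter_filter] at hsplit
  rw [card_univ, dart_card_eq_twice_card_edges] at hall
  have hinside := G.card_darts_fst_mem_snd_mem_le s k h
  have hleaving := G.card_darts_fst_mem_snd_notMem_le s
  rw [← card_darts_fst_mem]
  omega

lemma three_mul_card_degree_eq_four_le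
    (h : ∀ x, G.degree x = 4 → #{y ∈ G.neighborFinset x | G.degree y = 4} ≤ 2) :
    3 * #{v | G.degree v = 4} ≤ #G.edgeFinset := by
  have hsum : ∑ v ∈ {v | G.degree v = 4}, G.degree v = 4 * #{v | G.degree v = 4} := by
    rw [sum_congr rfl fun v hv => (mem_filter.1 hv).2, sum_const, smul_eq_mul, mul_comm]
  have hdarts := G.two_mul_sum_degree_le {v | G.degree v = 4} 2 fun x hx => by
    simpa only [mem_filter, mem_univ, true_and] using h x (mem_filter.1 hx).2
  omega

end SimpleGraph

theorem n3_plus_2n4_bound_general {V : Type} [Fintype V] [DecidableEq V]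
    (G : SimpleGraph V) [DecidableRel G.Adj]
    (hN4 : ∀ x : V, G.degree x = 4 →
      ((G.neighborFinset x).filter fun y => G.degree y = 4).card ≤ 2) :
    ((Finset.univ.filter fun v : V => G.degree v = 3).card
      + 2 * (Finset.univ.filter fun v : V => G.degree v = 4).card : ℝ)
      ≤ (8 / 9) * G.edgeFinset.card := by
  have handshake := G.mul_card_degree_eq_add_mul_card_degree_eq_le (k := 3) (l := 4) (by norm_num)
  have hn4 := G.three_mul_card_degree_eq_four_le hN4
  have key : 9 * (#{v | G.degree v = 3} + 2 * #{v | G.degree v = 4}) ≤ 8 * #G.edgeFinset := by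
    omega
  have key_real : (9 * (#{v | G.degree v = 3} + 2 * #{v | G.degree v = 4}) : ℝ)
      ≤ 8 * #G.edgeFinset := by
    exact_mod_cast key
  linarith

theorem n3_plus_2n4_bound {V : Type} [Fintype V] [DecidableEq V]
    (G : SimpleGraph V) [DecidableRel G.Adj]
    (hmax : ∀ v : V, G.degree v ≤ 4)
    (hmin : ∀ v : V, 2 ≤ G.degree v)
    (hN4 : ∀ x : V, G.degree x = 4 →
      ((G.neighborFinset x).filter fun y => G.degree y = 4).card ≤ 2) :
    ((Finset.univ.filter fun v : V => G.degree v = 3).card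
      + 2 * (Finset.univ.filter fun v : V => G.degree v = 4).card : ℝ)
      ≤ (8 / 9) * G.edgeFinset.card :=
  n3_plus_2n4_bound_general G hN4
end

section
/- Let p, q, a1, a2 be positive real numbers with a1 + a2 ≥ p, a1 ≥ q, a2 ≥ q, and p ≥ 2q. Then the branching factor τ(a1, a2) is at most τ(q, p − q), where τ(b1, b2) denotes the unique real root x > 1 of the equation x^{−b1} + x^{−b2} = 1. -/
/-! For `y ≥ 1`, moving the exponents of `y ^ (-a₁) + y ^ (-a₂)` apart with fixed sum (to `q` and
`a₁ + a₂ - q`), then lowering the larger one to `p - q`, can only increase this sum; so it is at most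
`1` at `y`. As `x ↦ x ^ (-a₁) + x ^ (-a₂)` is strictly decreasing and equals `1` at `x`, `x ≤ y`. -/

open Real Set

/-- The difference of the two sides is `(y ^ (-q) - y ^ (-a₁)) * (1 - y ^ (q - a₂)) ≥ 0`. -/
lemma rpow_neg_add_rpow_neg_le_of_spread {y q a₁ a₂ : ℝ} (hy : 1 ≤ y) (h₁ : q ≤ a₁)
    (h₂ : q ≤ a₂) : y ^ (-a₁) + y ^ (-a₂) ≤ y ^ (-q) + y ^ (-(a₁ + a₂ - q)) := by
  have hy₀ : 0 < y := one_pos.trans_le hy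
  have hfirst : y ^ (-a₁) ≤ y ^ (-q) := rpow_le_rpow_of_exponent_le hy (by linarith)
  have hsecond : y ^ (q - a₂) ≤ 1 := rpow_le_one_of_one_le_of_nonpos hy (by linarith)
  have hsplit₂ : y ^ (-a₂) = y ^ (-q) * y ^ (q - a₂) := by
    rw [← rpow_add hy₀]; ring_nf
  have hsplit₃ : y ^ (-(a₁ + a₂ - q)) = y ^ (-a₁) * y ^ (q - a₂) := by
    rw [← rpow_add hy₀]; ring_nf
  rw [hsplit₂, hsplit₃]
  nlinarith [mul_le_mul_of_nonneg_right hfirst (sub_nonneg.2 hsecond)]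

lemma rpow_neg_add_rpow_neg_strictAntiOn {a b : ℝ} (ha : 0 < a) (hb : 0 < b) :
    StrictAntiOn (fun x : ℝ => x ^ (-a) + x ^ (-b)) (Ioi 0) := fun _ hx _ _ hxy =>
  add_lt_add (rpow_lt_rpow_of_neg hx hxy (neg_neg_of_pos ha))
    (rpow_lt_rpow_of_neg hx hxy (neg_neg_of_pos hb))

theorem branching_vector_dominance_general (p q a1 a2 : ℝ)
    (ha1 : 0 < a1) (ha2 : 0 < a2)
    (hsum : p ≤ a1 + a2) (h1 : q ≤ a1) (h2 : q ≤ a2)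
    (x y : ℝ) (hxroot : x ^ (-a1) + x ^ (-a2) = 1)
    (hy : 1 < y) (hyroot : y ^ (-q) + y ^ (-(p - q)) = 1) :
    x ≤ y := by
  have hy₀ : 0 < y := one_pos.trans hy
  have hat_y : y ^ (-a1) + y ^ (-a2) ≤ 1 := calc
    _ ≤ y ^ (-q) + y ^ (-(a1 + a2 - q)) := rpow_neg_add_rpow_neg_le_of_spread hy.le h1 h2
    _ ≤ y ^ (-q) + y ^ (-(p - q)) := by gcongr; linarith
    _ = 1 := hyroot
  by_contra! hyx
  have := rpow_neg_add_rpow_neg_strictAntiOn ha1 ha2 (mem_Ioi.2 hy₀)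
    (mem_Ioi.2 (hy₀.trans hyx)) hyx
  simp only at this
  linarith

theorem branching_vector_dominance (p q a1 a2 : ℝ)
    (hp : 0 < p) (hq : 0 < q) (ha1 : 0 < a1) (ha2 : 0 < a2)
    (hsum : p ≤ a1 + a2) (h1 : q ≤ a1) (h2 : q ≤ a2) (hpq : 2 * q ≤ p)
    (x y : ℝ) (hx : 1 < x) (hxroot : x ^ (-a1) + x ^ (-a2) = 1)
    (hy : 1 < y) (hyroot : y ^ (-q) + y ^ (-(p - q)) = 1) :
    x ≤ y :=
  branching_vector_dominance_general p q a1 a2 ha1 ha2 hsum h1 h2 x y hxroot hy hyroot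
end
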